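/- For all integers q ≥ 2 and 1 ≤ d ≤ n, one has A_q(n,d) ≥ q^n / Σ_{i=0}^{d−1} C(n,i)·(q−1)^i (the Gilbert–Varshamov bound). -/

import Mathlib

open Finset

/-- `minDistGE q n d C` : any two distinct codewords of `C ⊆ Q^n` have Hamming
distance at least `d`. -/
def minDistGE (q n d : ℕ) (C : Finset (Fin n → Fin q)) : Prop :=
  ∀ u ∈ C, ∀ v ∈ C, u ≠ v → d ≤ hammingDist u v

/-- `Aq q n d` : maximum cardinality of a `q`-ary code of length `n` with minimum
Hamming distance at least `d`. -/
noncomputable def Aq (q n d : ℕ) : ℕ :=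
  sSup {k : ℕ | ∃ C : Finset (Fin n → Fin q), minDistGE q n d C ∧ C.card = k}

/-!
A code `C` of maximal size `A_q(n,d)` is a covering code: a word at distance `≥ d` from every
codeword could be added to it. So the Hamming balls of radius `d - 1` around the codewords cover
`Q^n`, and each of them has at most `Σ_{i<d} C(n,i)·(q-1)^i` words: choose the `i` coordinates
where a word differs from the centre, then a differing symbol in each.
-/

section HammingBall

variable {ι α : Type*} [Fintype ι] [DecidableEq ι] [Fintype α] [DecidableEq α]

def hammingSphere (u : ι → α) (i : ℕ) : Finset (ι → α) := {y | hammingDist u y = i}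

def hammingBall (u : ι → α) (r : ℕ) : Finset (ι → α) := {y | hammingDist u y < r}

theorem card_hammingSphere_le (u : ι → α) (i : ℕ) :
    #(hammingSphere u i) ≤ (Fintype.card ι).choose i * (Fintype.card α - 1) ^ i := by
  -- the words that differ from `u` exactly on `S`
  let pattern (S : Finset ι) : Finset (ι → α) :=
    Fintype.piFinset fun j => if j ∈ S then univ.erase (u j) else {u j}
  have hcover : hammingSphere u i ⊆ (powersetCard i univ).biUnion pattern := by
    intro y hy
    refine mem_biUnion.2 ⟨({j | u j ≠ y j} : Finset ι), ?_, ?_⟩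
    · simpa [hammingSphere, hammingDist] using hy
    · simp only [pattern, Fintype.mem_piFinset]
      intro j
      by_cases h : u j = y j <;> simp [h, Ne.symm]
  have hcard_pattern : ∀ S ∈ powersetCard i univ, #(pattern S) = (Fintype.card α - 1) ^ i := by
    intro S hS
    rw [mem_powersetCard] at hS
    simp [pattern, apply_ite card, prod_ite_mem, hS.2]
  calc #(hammingSphere u i)
      ≤ #((powersetCard i univ).biUnion pattern) := card_le_card hcover
    _ ≤ ∑ S ∈ powersetCard i univ, #(pattern S) := card_biUnion_le
    _ = (Fintype.card ι).choose i * (Fintype.card α - 1) ^ i := by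
      rw [sum_congr rfl hcard_pattern, sum_const, card_powersetCard, card_univ, smul_eq_mul]

theorem card_hammingBall_le (u : ι → α) (r : ℕ) :
    #(hammingBall u r) ≤ ∑ i ∈ range r, (Fintype.card ι).choose i * (Fintype.card α - 1) ^ i := by
  have hball : hammingBall u r = (range r).biUnion (hammingSphere u) := by
    ext y
    simp [hammingBall, hammingSphere]
  rw [hball]
  exact card_biUnion_le.trans (sum_le_sum fun i _ => card_hammingSphere_le u i)

theorem card_le_card_mul_of_forall_exists_hammingDist_lt {C : Finset (ι → α)} {r : ℕ}
    (hC : ∀ x, ∃ u ∈ C, hammingDist u x < r) :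
    Fintype.card (ι → α) ≤
      #C * ∑ i ∈ range r, (Fintype.card ι).choose i * (Fintype.card α - 1) ^ i := by
  have hcover : (univ : Finset (ι → α)) ⊆ C.biUnion fun u => hammingBall u r := by
    intro x _
    obtain ⟨u, hu, hux⟩ := hC x
    exact mem_biUnion.2 ⟨u, hu, by simpa [hammingBall] using hux⟩
  calc Fintype.card (ι → α) = #(univ : Finset (ι → α)) := card_univ.symm
    _ ≤ ∑ u ∈ C, #(hammingBall u r) := (card_le_card hcover).trans card_biUnion_le
    _ ≤ #C * ∑ i ∈ range r, (Fintype.card ι).choose i * (Fintype.card α - 1) ^ i := by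
      simpa using sum_le_sum fun (u : ι → α) _ => card_hammingBall_le u r

end HammingBall

section Aq

variable {q n d : ℕ}

theorem minDistGE.insert {C : Finset (Fin n → Fin q)} {x : Fin n → Fin q}
    (hC : minDistGE q n d C) (hx : ∀ u ∈ C, d ≤ hammingDist u x) :
    minDistGE q n d (insert x C) := by
  intro u hu v hv huv
  rcases mem_insert.1 hu with rfl | huC <;> rcases mem_insert.1 hv with rfl | hvC
  · exact absurd rfl huv
  · exact hammingDist_comm u v ▸ hx v hvC
  · exact hx u huC
  · exact hC u huC v hvC huv

theorem bddAbove_card_minDistGE (q n d : ℕ) :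
    BddAbove {k : ℕ | ∃ C : Finset (Fin n → Fin q), minDistGE q n d C ∧ C.card = k} :=
  ⟨Fintype.card (Fin n → Fin q), fun _ ⟨C, _, hC⟩ => hC ▸ C.card_le_univ⟩

theorem card_le_Aq {C : Finset (Fin n → Fin q)} (hC : minDistGE q n d C) : C.card ≤ Aq q n d :=
  le_csSup (bddAbove_card_minDistGE q n d) ⟨C, hC, rfl⟩

theorem exists_minDistGE_card_eq_Aq (q n d : ℕ) :
    ∃ C : Finset (Fin n → Fin q), minDistGE q n d C ∧ C.card = Aq q n d :=
  Nat.sSup_mem (s := {k | ∃ C : Finset (Fin n → Fin q), minDistGE q n d C ∧ C.card = k})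
    ⟨0, ∅, fun _ h => absurd h (notMem_empty _), card_empty⟩ (bddAbove_card_minDistGE q n d)

theorem exists_hammingDist_lt_of_card_eq_Aq (hd : 0 < d) {C : Finset (Fin n → Fin q)}
    (hC : minDistGE q n d C) (hcard : C.card = Aq q n d) (x : Fin n → Fin q) :
    ∃ u ∈ C, hammingDist u x < d := by
  by_contra! hfar
  have hxC : x ∉ C := fun hx => by simpa using (hfar x hx).trans_lt' hd
  have := card_le_Aq (hC.insert hfar)
  rw [card_insert_of_notMem hxC, hcard] at this
  omega

end Aq

theorem gilbert_varshamov_general (q n d : ℕ) (hq : 2 ≤ q) (hd1 : 1 ≤ d) :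
    (q : ℝ) ^ n / (∑ i ∈ Finset.range d, (n.choose i : ℝ) * ((q : ℝ) - 1) ^ i)
      ≤ (Aq q n d : ℝ) := by
  obtain ⟨C, hC, hcard⟩ := exists_minDistGE_card_eq_Aq q n d
  have hcount : q ^ n ≤ Aq q n d * ∑ i ∈ range d, n.choose i * (q - 1) ^ i := by
    simpa [hcard] using card_le_card_mul_of_forall_exists_hammingDist_lt
      (exists_hammingDist_lt_of_card_eq_Aq hd1 hC hcard)
  have hcast : ((∑ i ∈ range d, n.choose i * (q - 1) ^ i : ℕ) : ℝ) =
      ∑ i ∈ range d, (n.choose i : ℝ) * ((q : ℝ) - 1) ^ i := by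
    push_cast [Nat.cast_sub (by omega : 1 ≤ q)]
    rfl
  rw [← hcast]
  exact div_le_of_le_mul₀ (Nat.cast_nonneg _) (Nat.cast_nonneg _) (by exact_mod_cast hcount)

/-- The Gilbert–Varshamov bound:
`A_q(n,d) ≥ q^n / Σ_{i=0}^{d−1} C(n,i)·(q−1)^i`. -/
theorem gilbert_varshamov (q n d : ℕ) (hq : 2 ≤ q) (hd1 : 1 ≤ d) (hdn : d ≤ n) :
    (q : ℝ) ^ n / (∑ i ∈ Finset.range d, (n.choose i : ℝ) * ((q : ℝ) - 1) ^ i)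
      ≤ (Aq q n d : ℝ) :=
  gilbert_varshamov_general q n d hq hd1
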